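/- Let L ⊆ Q be an extension of Hom-Lie algebras such that Q is ideally absorbed into L, and let q ∈ Q. Then (L:q) is an essential Hom-ideal of L and Ann_L((L:q)) = {0}. -/

import Mathlib

/-!
If `I` is a Hom-ideal of `L` with `[I, α(q)] ⊆ L`, a Jacobi-identity induction on the length of
the iterated brackets spanning `_L(q)` shows `I ⊆ (L : q)`. Ideal absorption supplies such an
`I` with `Ann_L(I) = {0}` (for `q = 0` take `I = L`), and a Hom-ideal containing an ideal with
zero annihilator inherits both properties: if `J ∩ I = {0}` then `[J, α(I)] ⊆ J ∩ I` vanishes,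
so `J ⊆ Ann_L(I) = {0}`.
-/

/-- A Hom-Lie algebra structure on a vector space `Q` over a field `𝔽`, with the
twisting map `α` additionally satisfying condition (2.1):
`α [x,y] = [α x, y] = [x, α y]`. -/
structure HomLieAlgebra (𝔽 : Type*) [Field 𝔽] (Q : Type*) [AddCommGroup Q] [Module 𝔽 Q] where
  bracket : Q →ₗ[𝔽] Q →ₗ[𝔽] Q
  alpha : Q →ₗ[𝔽] Q
  skew : ∀ x y, bracket x y = - bracket y x
  jacobi : ∀ x y z, bracket (alpha x) (bracket y z) + bracket (alpha y) (bracket z x)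
      + bracket (alpha z) (bracket x y) = 0
  comm₁ : ∀ x y, alpha (bracket x y) = bracket (alpha x) y
  comm₂ : ∀ x y, alpha (bracket x y) = bracket x (alpha y)

namespace HomLieAlgebra

variable {𝔽 : Type*} [Field 𝔽] {Q : Type*} [AddCommGroup Q] [Module 𝔽 Q]
variable (H : HomLieAlgebra 𝔽 Q)

/-- `S` is a Hom-subalgebra: a subspace closed under `α` and the bracket. -/
def IsSubalgebra (S : Submodule 𝔽 Q) : Prop :=
  (∀ x ∈ S, H.alpha x ∈ S) ∧ ∀ x ∈ S, ∀ y ∈ S, H.bracket x y ∈ S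

/-- `I` is a Hom-ideal of the Hom-subalgebra `L`:
a subspace `I ⊆ L` with `α(I) ⊆ I` and `[I, L] ⊆ I`. -/
def IsIdealOf (L I : Submodule 𝔽 Q) : Prop :=
  I ≤ L ∧ (∀ x ∈ I, H.alpha x ∈ I) ∧ ∀ x ∈ I, ∀ y ∈ L, H.bracket x y ∈ I

/-- The α-annihilator of the set `S` inside the subalgebra `M`:
`Ann_M(S) = {x ∈ M | [x, α(y)] = 0 for all y ∈ S}`. -/
def annIn (M : Submodule 𝔽 Q) (S : Set Q) : Set Q :=
  {x | x ∈ M ∧ ∀ y ∈ S, H.bracket x (H.alpha y) = 0}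

/-- `I` is an essential Hom-ideal of `L`: it hits every nonzero Hom-ideal of `L`. -/
def IsEssentialIdealOf (L I : Submodule 𝔽 Q) : Prop :=
  H.IsIdealOf L I ∧ ∀ J : Submodule 𝔽 Q, H.IsIdealOf L J → J ≠ ⊥ → I ⊓ J ≠ ⊥

/-- The Hom-Lie algebra `L` is semiprime: `[I, α(I)] ≠ {0}` for every nonzero
Hom-ideal `I` of `L`. -/
def IsSemiprimeOn (L : Submodule 𝔽 Q) : Prop :=
  ∀ I : Submodule 𝔽 Q, H.IsIdealOf L I → I ≠ ⊥ →
    ∃ x ∈ I, ∃ y ∈ I, H.bracket x (H.alpha y) ≠ 0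

/-- The Hom-Lie algebra `L` is prime: `[I, α(J)] ≠ {0}` for all nonzero
Hom-ideals `I`, `J` of `L`. -/
def IsPrimeOn (L : Submodule 𝔽 Q) : Prop :=
  ∀ I J : Submodule 𝔽 Q, H.IsIdealOf L I → I ≠ ⊥ → H.IsIdealOf L J → J ≠ ⊥ →
    ∃ x ∈ I, ∃ y ∈ J, H.bracket x (H.alpha y) ≠ 0

/-- The iterated brackets `[[…[[q,x₁],x₂],…],xₙ]` with `xᵢ ∈ L` (including `q` itself). -/
inductive IsWord (L : Submodule 𝔽 Q) (q : Q) : Q → Prop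
  | base : IsWord L q q
  | step {p : Q} (x : Q) : IsWord L q p → x ∈ L → IsWord L q (H.bracket p x)

/-- `_L(q)`: the linear span in `Q` of `q` together with all the iterated brackets
`[[…[[q,x₁],x₂],…],xₙ]` with `xᵢ ∈ L`. -/
def wordSpan (L : Submodule 𝔽 Q) (q : Q) : Submodule 𝔽 Q :=
  Submodule.span 𝔽 {p | H.IsWord L q p}

/-- `(L : q) = {x ∈ L | [x, α(_L(q))] ⊆ L}`, as a subspace of `Q`. -/
def quotIdeal (L : Submodule 𝔽 Q) (q : Q) : Submodule 𝔽 Q where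
  carrier := {x | x ∈ L ∧ ∀ p ∈ H.wordSpan L q, H.bracket x (H.alpha p) ∈ L}
  add_mem' := by
    rintro a b ⟨haL, ha⟩ ⟨hbL, hb⟩
    refine ⟨L.add_mem haL hbL, fun p hp => ?_⟩
    rw [map_add, LinearMap.add_apply]
    exact L.add_mem (ha p hp) (hb p hp)
  zero_mem' := ⟨L.zero_mem, fun p _ => by simp⟩
  smul_mem' := by
    rintro c a ⟨haL, ha⟩
    refine ⟨L.smul_mem c haL, fun p hp => ?_⟩
    rw [map_smul, LinearMap.smul_apply]
    exact L.smul_mem c (ha p hp)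

/-- `Q` is an algebra of quotients of its Hom-subalgebra `L`: for all `p, q ∈ Q` with
`p ≠ 0` there is `x ∈ (L : q)` with `[x, α(p)] ≠ 0`. -/
def IsAlgebraOfQuotients (L : Submodule 𝔽 Q) : Prop :=
  ∀ p q : Q, p ≠ 0 → ∃ x ∈ H.quotIdeal L q, H.bracket x (H.alpha p) ≠ 0

/-- `Q` is a weak algebra of quotients of its Hom-subalgebra `L`: for every nonzero
`q ∈ Q` there is `x ∈ L` with `0 ≠ [x, α(q)] ∈ L`. -/
def IsWeakAlgebraOfQuotients (L : Submodule 𝔽 Q) : Prop :=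
  ∀ q : Q, q ≠ 0 → ∃ x ∈ L, H.bracket x (H.alpha q) ≠ 0 ∧ H.bracket x (H.alpha q) ∈ L

/-- `Q` is ideally absorbed into `L`: for every nonzero `q ∈ Q` there is a Hom-ideal `I`
of `L` with `Ann_L(I) = {0}` and `{0} ≠ [I, α(q)] ⊆ L`. -/
def IsIdeallyAbsorbed (L : Submodule 𝔽 Q) : Prop :=
  ∀ q : Q, q ≠ 0 → ∃ I : Submodule 𝔽 Q, H.IsIdealOf L I ∧
    H.annIn L (I : Set Q) = {0} ∧
    (∃ y ∈ I, H.bracket y (H.alpha q) ≠ 0) ∧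
    ∀ y ∈ I, H.bracket y (H.alpha q) ∈ (L : Set Q)

/-- The inner derivation `ad_q : p ↦ [α(q), p]`. -/
def ad (q : Q) : Module.End 𝔽 Q := H.bracket (H.alpha q)

end HomLieAlgebra

namespace HomLieAlgebra

variable {𝔽 Q : Type*} [Field 𝔽] [AddCommGroup Q] [Module 𝔽 Q] (H : HomLieAlgebra 𝔽 Q)

lemma bracket_alpha_left (x y : Q) :
    H.bracket (H.alpha x) y = H.bracket x (H.alpha y) := by
  rw [← H.comm₁, H.comm₂]

lemma bracket_alpha_skew (x y : Q) :
    H.bracket x (H.alpha y) = -H.bracket y (H.alpha x) := by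
  rw [← H.comm₂, ← H.comm₂, H.skew x y, map_neg]

/-- The Jacobi identity for `α p, y, x`, with `α` moved across the brackets by (2.1). -/
lemma bracket_bracket_alpha_add (x y p : Q) :
    H.bracket (H.bracket x y) (H.alpha p) + H.bracket y (H.bracket x (H.alpha p))
      + H.bracket x (H.alpha (H.bracket p y)) = 0 := by
  have h := H.jacobi p y x
  rwa [H.skew (H.alpha p), H.skew y x, map_neg, LinearMap.neg_apply, neg_neg,
    H.bracket_alpha_left y, H.comm₂, H.bracket_alpha_left x] at h

lemma zero_mem_annIn (M : Submodule 𝔽 Q) (S : Set Q) : (0 : Q) ∈ H.annIn M S :=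
  ⟨M.zero_mem, fun _ _ => by simp⟩

lemma annIn_anti {M : Submodule 𝔽 Q} {S T : Set Q} (hST : S ⊆ T) :
    H.annIn M T ⊆ H.annIn M S :=
  fun _ ⟨hxM, hx⟩ => ⟨hxM, fun y hy => hx y (hST hy)⟩

lemma isIdealOf_self {L : Submodule 𝔽 Q} (hL : H.IsSubalgebra L) : H.IsIdealOf L L :=
  ⟨le_rfl, hL⟩

lemma bracket_alpha_mem_inf {L I J : Submodule 𝔽 Q} (hI : H.IsIdealOf L I)
    (hJ : H.IsIdealOf L J) {i j : Q} (hi : i ∈ I) (hj : j ∈ J) :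
    H.bracket j (H.alpha i) ∈ I ⊓ J := by
  have hαi : H.alpha i ∈ I := hI.2.1 i hi
  refine ⟨?_, hJ.2.2 j hj _ (hI.1 hαi)⟩
  rw [H.skew]
  exact I.neg_mem (hI.2.2 _ hαi j (hJ.1 hj))

lemma isEssentialIdealOf_of_le {L I K : Submodule 𝔽 Q} (hI : H.IsIdealOf L I)
    (hann : H.annIn L (I : Set Q) = {0}) (hK : H.IsIdealOf L K) (hIK : I ≤ K) :
    H.IsEssentialIdealOf L K := by
  refine ⟨hK, fun J hJ hJne hKJ => hJne ((Submodule.eq_bot_iff J).2 fun j hj => ?_)⟩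
  have hjann : j ∈ H.annIn L (I : Set Q) := by
    refine ⟨hJ.1 hj, fun i hi => ?_⟩
    have hmem := H.bracket_alpha_mem_inf hI hJ hi hj
    have : H.bracket j (H.alpha i) ∈ K ⊓ J := ⟨hIK hmem.1, hmem.2⟩
    rwa [hKJ, Submodule.mem_bot] at this
  rwa [hann] at hjann

lemma annIn_self_eq_zero_of_isIdeallyAbsorbed {L : Submodule 𝔽 Q}
    (habs : H.IsIdeallyAbsorbed L) : H.annIn L (L : Set Q) = {0} := by
  refine Set.Subset.antisymm (fun x ⟨_, hx⟩ => ?_) (by simpa using H.zero_mem_annIn L L)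
  by_contra hx0
  obtain ⟨I, hI, -, ⟨y, hyI, hy⟩, -⟩ := habs x hx0
  exact hy (by rw [H.bracket_alpha_skew, hx y (hI.1 hyI), neg_zero])

lemma wordSpan_bracket_mem {L : Submodule 𝔽 Q} {q p y : Q} (hp : p ∈ H.wordSpan L q)
    (hy : y ∈ L) : H.bracket p y ∈ H.wordSpan L q := by
  induction hp using Submodule.span_induction with
  | mem p hp => exact Submodule.subset_span (IsWord.step y hp hy)
  | zero => simp
  | add a b _ _ ha hb => rw [map_add, LinearMap.add_apply]; exact add_mem ha hb
  | smul c a _ ha => rw [map_smul, LinearMap.smul_apply]; exact Submodule.smul_mem _ c ha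

lemma mem_quotIdeal_of_forall_isWord {L : Submodule 𝔽 Q} {q x : Q} (hx : x ∈ L)
    (hwords : ∀ p, H.IsWord L q p → H.bracket x (H.alpha p) ∈ L) :
    x ∈ H.quotIdeal L q := by
  refine ⟨hx, fun p hp => ?_⟩
  induction hp using Submodule.span_induction with
  | mem p hp => exact hwords p hp
  | zero => simp
  | add a b _ _ ha hb => rw [map_add, map_add]; exact L.add_mem ha hb
  | smul c a _ ha => rw [map_smul, map_smul]; exact L.smul_mem c ha

lemma quotIdeal_isIdealOf {L : Submodule 𝔽 Q} (hL : H.IsSubalgebra L) (q : Q) :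
    H.IsIdealOf L (H.quotIdeal L q) := by
  refine ⟨fun x hx => hx.1, fun x ⟨hxL, hx⟩ => ⟨hL.1 x hxL, fun p hp => ?_⟩,
    fun x ⟨hxL, hx⟩ y hy => ⟨hL.2 x hxL y hy, fun p hp => ?_⟩⟩
  · rw [← H.comm₁]
    exact hL.1 _ (hx p hp)
  · have h := H.bracket_bracket_alpha_add x y p
    rw [add_assoc, add_eq_zero_iff_eq_neg] at h
    rw [h]
    exact L.neg_mem (L.add_mem (hL.2 y hy _ (hx p hp)) (hx _ (H.wordSpan_bracket_mem hp hy)))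

lemma le_quotIdeal {L I : Submodule 𝔽 Q} (hL : H.IsSubalgebra L) (hI : H.IsIdealOf L I)
    {q : Q} (hq : ∀ x ∈ I, H.bracket x (H.alpha q) ∈ L) : I ≤ H.quotIdeal L q := by
  have hwords : ∀ p, H.IsWord L q p → ∀ x ∈ I, H.bracket x (H.alpha p) ∈ L := by
    intro p hp
    induction hp with
    | base => exact hq
    | @step p y _ hy ih =>
      intro x hx
      rw [eq_neg_of_add_eq_zero_right (H.bracket_bracket_alpha_add x y p)]
      exact L.neg_mem (L.add_mem (ih _ (hI.2.2 x hx y hy)) (hL.2 y hy _ (ih x hx)))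
  exact fun x hx => H.mem_quotIdeal_of_forall_isWord (hI.1 hx) fun p hp => hwords p hp x hx

end HomLieAlgebra

/-- If `Q` is ideally absorbed into its Hom-subalgebra `L` and `q ∈ Q`, then
`(L : q)` is an essential Hom-ideal of `L` and `Ann_L((L : q)) = {0}`. -/
theorem quotIdeal_essential_of_isIdeallyAbsorbed
    {𝔽 Q : Type*} [Field 𝔽] [AddCommGroup Q] [Module 𝔽 Q]
    (H : HomLieAlgebra 𝔽 Q) (L : Submodule 𝔽 Q) (hL : H.IsSubalgebra L)
    (habs : H.IsIdeallyAbsorbed L) (q : Q) :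
    H.IsEssentialIdealOf L (H.quotIdeal L q) ∧
    H.annIn L (H.quotIdeal L q : Set Q) = {0} := by
  obtain ⟨I, hI, hann, hIq⟩ : ∃ I, H.IsIdealOf L I ∧ H.annIn L (I : Set Q) = {0} ∧
      I ≤ H.quotIdeal L q := by
    by_cases hq : q = 0
    · subst hq
      exact ⟨L, H.isIdealOf_self hL, H.annIn_self_eq_zero_of_isIdeallyAbsorbed habs,
        H.le_quotIdeal hL (H.isIdealOf_self hL) (by simp)⟩
    · obtain ⟨I, hI, hann, -, hIq⟩ := habs q hq
      exact ⟨I, hI, hann, H.le_quotIdeal hL hI hIq⟩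
  refine ⟨H.isEssentialIdealOf_of_le hI hann (H.quotIdeal_isIdealOf hL q) hIq, ?_⟩
  exact Set.Subset.antisymm (hann ▸ H.annIn_anti hIq) (by simpa using H.zero_mem_annIn _ _)
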